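/- Let w = 2^{n_lub} with 0 ≤ n_lub ≤ n, and let u_i = 1^{(s₁,…,sₙ)} where s₁ = ⋯ = sᵢ = − and s_{i+1} = ⋯ = sₙ = + (the canonical column of G₂^{⊗n} with i minus signs). Then n_DRS(u_i) = 1 if i ≤ n_lub, and n_DRS(u_i) = 2^{i − n_lub} if i > n_lub; in the latter case every output vector has Hamming weight exactly 2^{n_lub}. -/

import Mathlib

/-- Hamming weight of a vector over `ZMod 2` represented as a list. -/
def wtH (l : List (ZMod 2)) : ℕ := l.countP (fun a => a ≠ 0)

/-- The DRS splitting algorithm on vectors of length `2^n` with weight threshold `w`. -/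
def drs (w : ℕ) : ℕ → List (ZMod 2) → List (List (ZMod 2))
  | 0, x => if wtH x = 0 then [] else [x]
  | n + 1, x =>
      if wtH x = 0 then []
      else if wtH x ≤ w then [x]
      else ((drs w n (x.take (2 ^ n))).map (fun y => y ++ List.replicate (2 ^ n) 0)) ++
           ((drs w n (x.drop (2 ^ n))).map (fun y => List.replicate (2 ^ n) (0 : ZMod 2) ++ y))

/-- One Kronecker-product step: `true` (minus sign) is `v ⊗ [1,1]ᵀ`, `false` (plus
sign) is `v ⊗ [0,1]ᵀ`. -/
def kronStep (b : Bool) (v : List (ZMod 2)) : List (ZMod 2) :=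
  if b then v ++ v else List.replicate v.length 0 ++ v

/-- The canonical column `u_i` of `G₂^{⊗n}` with `i` minus signs first: obtained from
`[1]` by `i` Kronecker products with `[1,1]ᵀ` followed by `n−i` with `[0,1]ᵀ`. -/
def uCol (n i : ℕ) : List (ZMod 2) :=
  (List.replicate i true ++ List.replicate (n - i) false).foldl
    (fun acc b => kronStep b acc) [1]

/-!
A `[0,1]ᵀ` factor of `u_i` contributes an all-zero half, which DRS discards, and a `[1,1]ᵀ` factor
two equal halves, both of which DRS keeps. So DRS peels off the `n - i` outer levels without
branching and then branches at every level until the blocks of ones have the threshold weight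
`2^{n_lub}`, i.e. `i - n_lub` times.
-/

section wtH

theorem wtH_append (a b : List (ZMod 2)) : wtH (a ++ b) = wtH a + wtH b :=
  List.countP_append

@[simp]
theorem wtH_replicate_zero (k : ℕ) : wtH (List.replicate k 0) = 0 := by
  simp [wtH, List.countP_replicate]

theorem wtH_zeros_append (k : ℕ) (y : List (ZMod 2)) :
    wtH (List.replicate k 0 ++ y) = wtH y := by
  simp [wtH_append]

theorem wtH_append_zeros (k : ℕ) (y : List (ZMod 2)) :
    wtH (y ++ List.replicate k 0) = wtH y := by
  simp [wtH_append]

end wtH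

section kronStep

theorem length_kronStep (b : Bool) (v : List (ZMod 2)) :
    (kronStep b v).length = 2 * v.length := by
  cases b <;> simp [kronStep] <;> omega

theorem wtH_kronStep (b : Bool) (v : List (ZMod 2)) :
    wtH (kronStep b v) = (if b then 2 else 1) * wtH v := by
  cases b <;> simp [kronStep, wtH_append]; omega

theorem length_foldl_kronStep (bs : List Bool) (v : List (ZMod 2)) :
    (bs.foldl (fun acc b => kronStep b acc) v).length = 2 ^ bs.length * v.length := by
  induction bs generalizing v with
  | nil => simp
  | cons b bs ih => rw [List.foldl_cons, ih, length_kronStep, List.length_cons, pow_succ]; ring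

theorem wtH_foldl_kronStep (bs : List Bool) (v : List (ZMod 2)) :
    wtH (bs.foldl (fun acc b => kronStep b acc) v) = 2 ^ bs.count true * wtH v := by
  induction bs generalizing v with
  | nil => simp
  | cons b bs ih => cases b <;> simp [ih, wtH_kronStep, pow_succ]; ring

end kronStep

section uCol

theorem length_uCol {n i : ℕ} (hi : i ≤ n) : (uCol n i).length = 2 ^ n := by
  rw [uCol, length_foldl_kronStep, List.length_append, List.length_replicate,
    List.length_replicate, Nat.add_sub_cancel' hi, List.length_singleton, mul_one]

theorem wtH_uCol (n i : ℕ) : wtH (uCol n i) = 2 ^ i := by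
  rw [uCol, wtH_foldl_kronStep]
  simp [List.count_replicate, wtH]

theorem uCol_succ_of_le {n i : ℕ} (hi : i ≤ n) :
    uCol (n + 1) i = kronStep false (uCol n i) := by
  rw [uCol, Nat.sub_add_comm hi, List.replicate_succ', ← List.append_assoc, List.foldl_append]
  rfl

theorem uCol_succ_self (n : ℕ) : uCol (n + 1) (n + 1) = kronStep true (uCol n n) := by
  simp [uCol, List.replicate_succ', List.foldl_append]

end uCol

section drs

variable {w n : ℕ} {x : List (ZMod 2)}

theorem drs_eq_nil (h : wtH x = 0) : drs w n x = [] := by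
  cases n <;> simp [drs, h]

theorem drs_eq_singleton (h₀ : wtH x ≠ 0) (hw : wtH x ≤ w) : drs w n x = [x] := by
  cases n <;> simp [drs, h₀, hw]

theorem drs_succ_of_lt (h : w < wtH x) :
    drs w (n + 1) x =
      (drs w n (x.take (2 ^ n))).map (· ++ List.replicate (2 ^ n) 0) ++
        (drs w n (x.drop (2 ^ n))).map (List.replicate (2 ^ n) 0 ++ ·) := by
  rw [drs, if_neg (by omega), if_neg (by omega)]

theorem drs_succ_kronStep_false {v : List (ZMod 2)} (hv : v.length = 2 ^ n)
    (h : w < wtH (kronStep false v)) :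
    drs w (n + 1) (kronStep false v) = (drs w n v).map (List.replicate (2 ^ n) 0 ++ ·) := by
  have hz : (List.replicate (2 ^ n) (0 : ZMod 2)).length = 2 ^ n := List.length_replicate
  rw [drs_succ_of_lt h, kronStep, if_neg Bool.false_ne_true, hv, List.take_left' hz,
    List.drop_left' hz, drs_eq_nil (wtH_replicate_zero _), List.map_nil, List.nil_append]

theorem drs_succ_kronStep_true {v : List (ZMod 2)} (hv : v.length = 2 ^ n)
    (h : w < wtH (kronStep true v)) :
    drs w (n + 1) (kronStep true v) =
      (drs w n v).map (· ++ List.replicate (2 ^ n) 0) ++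
        (drs w n v).map (List.replicate (2 ^ n) 0 ++ ·) := by
  rw [drs_succ_of_lt h, kronStep, if_pos rfl, List.take_left' hv, List.drop_left' hv]

end drs

theorem drs_uCol_of_le {k i n : ℕ} (hk : k ≤ i) (hi : i ≤ n) :
    (drs (2 ^ k) n (uCol n i)).length = 2 ^ (i - k) ∧
      ∀ y ∈ drs (2 ^ k) n (uCol n i), wtH y = 2 ^ k := by
  induction n generalizing i with
  | zero =>
    obtain rfl : i = 0 := by omega
    obtain rfl : k = 0 := by omega
    simp [drs_eq_singleton, wtH_uCol]
  | succ n ih =>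
    rcases hk.eq_or_lt with rfl | hki
    · simp [drs_eq_singleton, wtH_uCol]
    have hw : 2 ^ k < wtH (uCol (n + 1) i) := by
      rw [wtH_uCol]; exact Nat.pow_lt_pow_right (by norm_num) hki
    rcases Nat.lt_or_ge i (n + 1) with hin | hin
    · have hin : i ≤ n := by omega
      rw [uCol_succ_of_le hin] at hw ⊢
      rw [drs_succ_kronStep_false (length_uCol hin) hw]
      obtain ⟨hlen, hwt⟩ := ih hk hin
      refine ⟨by rw [List.length_map, hlen], ?_⟩
      simp only [List.mem_map]
      rintro _ ⟨y, hy, rfl⟩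
      rw [wtH_zeros_append, hwt y hy]
    · obtain rfl : i = n + 1 := by omega
      rw [uCol_succ_self] at hw ⊢
      rw [drs_succ_kronStep_true (length_uCol le_rfl) hw]
      obtain ⟨hlen, hwt⟩ := ih (i := n) (by omega) le_rfl
      refine ⟨by rw [List.length_append, List.length_map, List.length_map, hlen,
        Nat.sub_add_comm (by omega), pow_succ]; ring, ?_⟩
      simp only [List.mem_append, List.mem_map]
      rintro _ (⟨y, hy, rfl⟩ | ⟨y, hy, rfl⟩)
      · rw [wtH_append_zeros, hwt y hy]
      · rw [wtH_zeros_append, hwt y hy]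

theorem drs_count_uCol_general (n nlub i : ℕ) (hi : i ≤ n) :
    (i ≤ nlub → (drs (2 ^ nlub) n (uCol n i)).length = 1) ∧
    (nlub < i →
      (drs (2 ^ nlub) n (uCol n i)).length = 2 ^ (i - nlub) ∧
      ∀ y ∈ drs (2 ^ nlub) n (uCol n i), wtH y = 2 ^ nlub) := by
  refine ⟨fun hle => ?_, fun hlt => drs_uCol_of_le hlt.le hi⟩
  have hw : wtH (uCol n i) ≤ 2 ^ nlub := by
    rw [wtH_uCol]; exact Nat.pow_le_pow_right (by norm_num) hle
  rw [drs_eq_singleton (by rw [wtH_uCol]; positivity) hw, List.length_singleton]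

/-- With threshold `w = 2^{n_lub}`, `n_DRS(u_i) = 1` for `i ≤ n_lub` and
`n_DRS(u_i) = 2^{i−n_lub}` for `i > n_lub`, and in the latter case every output
vector has Hamming weight exactly `2^{n_lub}`. -/
theorem drs_count_uCol (n nlub i : ℕ) (hnl : nlub ≤ n) (hi : i ≤ n) :
    (i ≤ nlub → (drs (2 ^ nlub) n (uCol n i)).length = 1) ∧
    (nlub < i →
      (drs (2 ^ nlub) n (uCol n i)).length = 2 ^ (i - nlub) ∧
      ∀ y ∈ drs (2 ^ nlub) n (uCol n i), wtH y = 2 ^ nlub) :=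
  drs_count_uCol_general n nlub i hi
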